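/- arXiv:1605.04263 — 7 statements merged into one kernel-verified Lean document; each statement's English description precedes it below -/
import Mathlib

section
/- Let A be a type, I an index type, and for each i ∈ I a type B_i. Let S_i ⊆ A × B_i for each i ∈ I, and let R ⊆ A × (Π_{i∈I} B_i). Assume: (i) each S_i is functional, i.e. (a,b) ∈ S_i and (a,b') ∈ S_i imply b = b'; and (ii) for every (a,b) ∈ R and every i ∈ I, (a, b(i)) ∈ S_i. Then R = {(a,b) ∈ A × (Π_{i∈I} B_i) | (∃ b', (a,b') ∈ R) ∧ (∀ i ∈ I, (a, b(i)) ∈ S_i)}. -/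
/-- Lemma 2 (redundant join elimination under an optimizing branching VFD):
if each `S i` is functional and every row of `R` joins consistently with each
`S i`, then `R` equals the projection of the branching join. -/
theorem branching_vfd_join_elimination
    {A : Type*} {I : Type*} {B : I → Type*}
    (S : ∀ i, Set (A × B i)) (R : Set (A × (∀ i, B i)))
    (hfun : ∀ i : I, ∀ (a : A) (b b' : B i), (a, b) ∈ S i → (a, b') ∈ S i → b = b')
    (hcont : ∀ a : A, ∀ b : ∀ i, B i, (a, b) ∈ R → ∀ i : I, (a, b i) ∈ S i) :
    R = {p : A × (∀ i, B i) |
          (∃ b' : ∀ i, B i, (p.1, b') ∈ R) ∧ ∀ i : I, (p.1, p.2 i) ∈ S i} := by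
  ext ⟨a, b⟩
  constructor
  · intro h
    exact ⟨⟨b, h⟩, hcont a b h⟩
  · rintro ⟨⟨b', hb'⟩, hS⟩
    have : b = b' := funext fun i => hfun i a (b i) (b' i) (hS i) (hcont a b' hb' i)
    rwa [this]
end

section
/- Let n ≥ 1, let B_0, …, B_n and U be types, let h_i : B_i → U be injective for each 0 ≤ i ≤ n, and let R_i ⊆ B_{i-1} × B_i for each 1 ≤ i ≤ n. Define P_i = {(h_{i-1}(a), h_i(b)) | (a,b) ∈ R_i} ⊆ U × U. Call a tuple (o_1,…,o_n) ∈ U^n a path from u ∈ U if (u,o_1) ∈ P_1 and (o_{j-1},o_j) ∈ P_j for all 2 ≤ j ≤ n. Then every u ∈ U has at most one path in (P_1,…,P_n) if and only if the chain relation C = {(a,(b_1,…,b_n)) | (a,b_1) ∈ R_1 and (b_{j-1},b_j) ∈ R_j for all 2 ≤ j ≤ n} ⊆ B_0 × (B_1 × … × B_n) is functional, i.e. (a,b) ∈ C and (a,b') ∈ C imply b = b'. -/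
/-!
Applying the injective templates `h j` pointwise turns chains of `R` into paths through the
images `P i`, and every path arises this way once `n ≥ 1` (each node is then an endpoint of some
edge, hence lies in the range of its template). Injectivity transfers equality of heads and of
whole sequences in both directions, so uniqueness of paths and uniqueness of chains coincide.
-/

def VFDPathSeq {U : Type*} {n : ℕ} (u : U) (o : Fin n → U) : Fin (n + 1) → U :=
  Fin.cases u o

def VFDChainSeq {n : ℕ} {B : Fin (n + 1) → Type*} (a : B 0) (b : ∀ i : Fin n, B i.succ) :
    ∀ i : Fin (n + 1), B i :=
  Fin.cases a b

section RelChain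

variable {n : ℕ} {B : Fin (n + 1) → Type*} {U : Type*}

def IsRelChain (R : ∀ i : Fin n, Set (B i.castSucc × B i.succ)) (s : ∀ j, B j) : Prop :=
  ∀ i : Fin n, (s i.castSucc, s i.succ) ∈ R i

def HeadDeterminesChain (R : ∀ i : Fin n, Set (B i.castSucc × B i.succ)) : Prop :=
  ∀ s s' : ∀ j, B j, IsRelChain R s → IsRelChain R s' → s 0 = s' 0 → s = s'

def mapRel (h : ∀ j, B j → U) (R : ∀ i : Fin n, Set (B i.castSucc × B i.succ)) :
    Fin n → Set (U × U) :=
  fun i => Prod.map (h i.castSucc) (h i.succ) '' R i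

theorem VFDChainSeq_head_tail (s : ∀ j, B j) : VFDChainSeq (s 0) (Fin.tail s) = s :=
  Fin.cons_self_tail s

theorem forall_isRelChain_cons_iff_headDeterminesChain
    (R : ∀ i : Fin n, Set (B i.castSucc × B i.succ)) :
    (∀ (a : B 0) (b b' : ∀ i : Fin n, B i.succ),
        IsRelChain R (VFDChainSeq a b) → IsRelChain R (VFDChainSeq a b') → b = b') ↔
      HeadDeterminesChain R := by
  constructor
  · intro H s s' hs hs' hhead
    have htail := H (s 0) (Fin.tail s) (Fin.tail s') (by rwa [VFDChainSeq_head_tail])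
      (by rwa [hhead, VFDChainSeq_head_tail])
    rw [← VFDChainSeq_head_tail s, ← VFDChainSeq_head_tail s', hhead, htail]
  · intro H a b b' hb hb'
    exact (Fin.cons_inj.mp (H _ _ hb hb' rfl)).2

variable {h : ∀ j, B j → U} {R : ∀ i : Fin n, Set (B i.castSucc × B i.succ)}

theorem isRelChain_mapRel_iff (hinj : ∀ j, Function.Injective (h j)) (s : ∀ j, B j) :
    IsRelChain (mapRel h R) (fun j => h j (s j)) ↔ IsRelChain R s := by
  refine ⟨fun hs i => ?_, fun hs i => ⟨_, hs i, rfl⟩⟩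
  obtain ⟨q, hq, hqs⟩ := hs i
  obtain ⟨h₁, h₂⟩ := Prod.ext_iff.mp hqs
  rwa [← hinj _ h₁, ← hinj _ h₂]

theorem exists_eq_map_of_isRelChain_mapRel (hn : 0 < n) {t : Fin (n + 1) → U}
    (ht : IsRelChain (mapRel h R) t) : ∃ s : ∀ j, B j, (fun j => h j (s j)) = t := by
  have hrange : ∀ j, t j ∈ Set.range (h j) := by
    refine Fin.cases ?_ fun i => ?_
    · obtain ⟨q, -, hq⟩ := ht ⟨0, hn⟩
      exact ⟨q.1, congrArg Prod.fst hq⟩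
    · obtain ⟨q, -, hq⟩ := ht i
      exact ⟨q.2, congrArg Prod.snd hq⟩
  choose s hs using hrange
  exact ⟨s, funext hs⟩

theorem headDeterminesChain_mapRel_iff (hn : 0 < n) (hinj : ∀ j, Function.Injective (h j)) :
    HeadDeterminesChain (B := fun _ => U) (mapRel h R) ↔ HeadDeterminesChain R := by
  constructor
  · intro H s s' hs hs' hhead
    have himage := H _ _ ((isRelChain_mapRel_iff hinj s).mpr hs)
      ((isRelChain_mapRel_iff hinj s').mpr hs') (congrArg (h 0) hhead)
    exact funext fun j => hinj j (congrFun himage j)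
  · intro H t t' ht ht' hhead
    obtain ⟨s, rfl⟩ := exists_eq_map_of_isRelChain_mapRel hn ht
    obtain ⟨s', rfl⟩ := exists_eq_map_of_isRelChain_mapRel hn ht'
    rw [isRelChain_mapRel_iff hinj] at ht ht'
    rw [H s s' ht ht' (hinj 0 hhead)]

end RelChain

/-- Appendix lemma (detection of path virtual functional dependencies):
with injective templates `h i` and `P i` the image of `R i`, every `u : U`
has at most one path through `P 1 … P n` iff the chain relation determined
by `R 1 … R n` is functional. -/
theorem path_vfd_detection
    (n : ℕ) (hn : 1 ≤ n) {U : Type*} (B : Fin (n + 1) → Type*)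
    (h : ∀ i, B i → U) (hinj : ∀ i, Function.Injective (h i))
    (R : ∀ i : Fin n, Set (B i.castSucc × B i.succ)) :
    (∀ (u : U) (o o' : Fin n → U),
        (∀ i : Fin n, (VFDPathSeq u o i.castSucc, VFDPathSeq u o i.succ) ∈
            (fun q : B i.castSucc × B i.succ => (h i.castSucc q.1, h i.succ q.2)) '' R i) →
        (∀ i : Fin n, (VFDPathSeq u o' i.castSucc, VFDPathSeq u o' i.succ) ∈
            (fun q : B i.castSucc × B i.succ => (h i.castSucc q.1, h i.succ q.2)) '' R i) →
        o = o')
    ↔ (∀ (a : B 0) (b b' : ∀ i : Fin n, B i.succ),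
        (∀ i : Fin n, (VFDChainSeq a b i.castSucc, VFDChainSeq a b i.succ) ∈ R i) →
        (∀ i : Fin n, (VFDChainSeq a b' i.castSucc, VFDChainSeq a b' i.succ) ∈ R i) →
        b = b') :=
  (forall_isRelChain_cons_iff_headDeterminesChain (B := fun _ => U) (mapRel h R)).trans <|
    (headDeterminesChain_mapRel_iff hn hinj).trans
      (forall_isRelChain_cons_iff_headDeterminesChain R).symm
end

section
/- Let n ≥ 1, let U, A and B_1,…,B_n be types, let f : A → U be injective, and for each 1 ≤ i ≤ n let g_i : B_i → U be injective. Let R ⊆ A × (B_1 × … × B_n) and S_i ⊆ A × B_i. Assume: (i) S_1 = {(a, b_1) | (a,(b_1,…,b_n)) ∈ R}; (ii) for every (a,b) ∈ R and every i, (a, b_i) ∈ S_i; and (iii) each S_i is functional ((a,b) ∈ S_i and (a,b') ∈ S_i imply b = b'). Define the virtual property extensions P_i = {(f(a), g_i(b)) | (a,b) ∈ S_i} ⊆ U × U. Then {(u, v_1, …, v_n) | (u,v_i) ∈ P_i for all 1 ≤ i ≤ n} = {(f(a), g_1(b_1), …, g_n(b_n)) | (a,(b_1,…,b_n)) ∈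 R}. -/
/-- Theorem 1 of the paper, branching case: under the satisfied optimizing
branching VFD, the unfolded join of the virtual property extensions
`P i = (f × g i) '' S i` collapses to the single source query `R` (`sql_1`). -/
theorem branching_vfd_bgp_collapse
    (n : ℕ) (hn : 1 ≤ n) {U A : Type*} (B : Fin n → Type*)
    (f : A → U) (hf : Function.Injective f)
    (g : ∀ i : Fin n, B i → U) (hg : ∀ i : Fin n, Function.Injective (g i))
    (R : Set (A × (∀ i : Fin n, B i))) (S : ∀ i : Fin n, Set (A × B i))
    (hS1 : S ⟨0, hn⟩ = {p : A × B ⟨0, hn⟩ |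
        ∃ b : ∀ i : Fin n, B i, (p.1, b) ∈ R ∧ b ⟨0, hn⟩ = p.2})
    (hcont : ∀ (a : A) (b : ∀ i : Fin n, B i), (a, b) ∈ R →
        ∀ i : Fin n, (a, b i) ∈ S i)
    (hfun : ∀ i : Fin n, ∀ (a : A) (b b' : B i),
        (a, b) ∈ S i → (a, b') ∈ S i → b = b') :
    {p : U × (Fin n → U) | ∀ i : Fin n,
        (p.1, p.2 i) ∈ (fun q : A × B i => (f q.1, g i q.2)) '' S i}
      = {p : U × (Fin n → U) | ∃ (a : A) (b : ∀ i : Fin n, B i),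
          (a, b) ∈ R ∧ p = (f a, fun i => g i (b i))} := by
  ext p
  simp only [Set.mem_setOf_eq, Set.mem_image]
  constructor
  · intro h
    obtain ⟨⟨a0, b0⟩, h0, heq0⟩ := h ⟨0, hn⟩
    obtain ⟨hf0, hg0⟩ := Prod.mk.injEq .. ▸ heq0
    rw [hS1] at h0
    obtain ⟨bvec, hR, hb0⟩ := h0
    refine ⟨a0, bvec, hR, ?_⟩
    have hp1 : p.1 = f a0 := hf0.symm
    have hp2 : ∀ i, p.2 i = g i (bvec i) := by
      intro i
      obtain ⟨⟨ai, bi⟩, hi, heqi⟩ := h i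
      obtain ⟨hfi, hgi⟩ := Prod.mk.injEq .. ▸ heqi
      have hai : ai = a0 := hf (hfi.trans hp1)
      subst hai
      have := hfun i ai bi (bvec i) hi (hcont _ _ hR i)
      rw [← hgi, this]
    exact Prod.ext hp1 (funext hp2)
  · rintro ⟨a, b, hR, rfl⟩ i
    exact ⟨(a, b i), hcont a b hR i, rfl⟩
end

section
/- Let n ≥ 1, let U and B_0,…,B_n be types, let h_i : B_i → U be injective for each 0 ≤ i ≤ n, let S_i ⊆ B_{i-1} × B_i for 1 ≤ i ≤ n, and let R ⊆ B_0 × (B_1 × … × B_n). Call (b_1,…,b_n) a chain from a if (a,b_1) ∈ S_1 and (b_{j-1},b_j) ∈ S_j for all 2 ≤ j ≤ n. Assume: (i) S_1 = {(a, b_1) | (a,(b_1,…,b_n)) ∈ R}; (ii) for every (a,b) ∈ R, b is a chain from a; and (iii) every a ∈ B_0 has at most one chain. Define P_i = {(h_{i-1}(a), h_i(b)) | (a,b) ∈ S_i} ⊆ U × U. Then {(u_0, u_1, …, u_n) | (u_{i-1}, u_i) ∈ P_i for all 1 ≤ i ≤ n} = {(h_0(a), h_1(b_1), …, h_n(b_n))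 | (a,(b_1,…,b_n)) ∈ R}. -/
/-- Theorem 1 of the paper, path case: under the satisfied optimizing path VFD,
the unfolded chain join of the virtual property extensions
`P i = (h i.castSucc × h i.succ) '' S i` collapses to the single source query
`R` (`sql_1`). -/
theorem path_vfd_bgp_collapse
    (n : ℕ) (hn : 1 ≤ n) {U : Type*} (B : Fin (n + 1) → Type*)
    (h : ∀ i, B i → U) (hinj : ∀ i, Function.Injective (h i))
    (S : ∀ i : Fin n, Set (B i.castSucc × B i.succ))
    (R : Set (B 0 × (∀ i : Fin n, B i.succ)))
    (hS1 : S ⟨0, hn⟩ = {p : B (⟨0, hn⟩ : Fin n).castSucc × B (⟨0, hn⟩ : Fin n).succ |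
        ∃ (a : B 0) (b : ∀ i : Fin n, B i.succ), (a, b) ∈ R ∧
          p = (VFDChainSeq a b (⟨0, hn⟩ : Fin n).castSucc,
               VFDChainSeq a b (⟨0, hn⟩ : Fin n).succ)})
    (hcont : ∀ (a : B 0) (b : ∀ i : Fin n, B i.succ), (a, b) ∈ R →
        ∀ i : Fin n, (VFDChainSeq a b i.castSucc, VFDChainSeq a b i.succ) ∈ S i)
    (hfun : ∀ (a : B 0) (b b' : ∀ i : Fin n, B i.succ),
        (∀ i : Fin n, (VFDChainSeq a b i.castSucc, VFDChainSeq a b i.succ) ∈ S i) →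
        (∀ i : Fin n, (VFDChainSeq a b' i.castSucc, VFDChainSeq a b' i.succ) ∈ S i) →
        b = b') :
    {w : Fin (n + 1) → U | ∀ i : Fin n,
        (w i.castSucc, w i.succ) ∈
          (fun q : B i.castSucc × B i.succ => (h i.castSucc q.1, h i.succ q.2)) '' S i}
      = {w : Fin (n + 1) → U | ∃ (a : B 0) (b : ∀ i : Fin n, B i.succ),
          (a, b) ∈ R ∧ w = fun j => h j (VFDChainSeq a b j)} := by
  ext w
  simp only [Set.mem_setOf_eq]
  constructor
  · intro hw
    -- pick witnesses for each edge
    have hw' : ∀ i : Fin n, ∃ q : B i.castSucc × B i.succ, q ∈ S i ∧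
        h i.castSucc q.1 = w i.castSucc ∧ h i.succ q.2 = w i.succ := by
      intro i
      obtain ⟨q, hq, heq⟩ := hw i
      exact ⟨q, hq, congrArg Prod.fst heq, congrArg Prod.snd heq⟩
    choose q hqS hq1 hq2 using hw'
    -- from the first edge and hS1, get (a, b) ∈ R
    have h0 := hqS ⟨0, hn⟩
    rw [hS1] at h0
    obtain ⟨a, b, hab, heq⟩ := h0
    have hq01 : (q ⟨0, hn⟩).1 = a := by
      have := congrArg Prod.fst heq
      simpa [VFDChainSeq] using this
    -- candidate chain from w
    set b' : ∀ i : Fin n, B i.succ := fun i => (q i).2 with hb'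
    have hseq : ∀ i : Fin n, VFDChainSeq a b' i.castSucc = (q i).1 := by
      rintro ⟨k, hk⟩
      match k with
      | 0 =>
        show VFDChainSeq a b' (0 : Fin (n+1)) = (q ⟨0, hk⟩).1
        rw [show (q ⟨0, hk⟩).1 = (q ⟨0, hn⟩).1 from rfl, hq01]
        simp [VFDChainSeq]
      | k + 1 =>
        have hk' : k < n := by omega
        show VFDChainSeq a b' (⟨k, hk'⟩ : Fin n).succ = (q ⟨k+1, hk⟩).1
        have h1 : VFDChainSeq a b' (⟨k, hk'⟩ : Fin n).succ = (q ⟨k, hk'⟩).2 := by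
          simp [VFDChainSeq, hb']
        rw [h1]
        -- types B (⟨k,hk'⟩:Fin n).succ and B (⟨k+1,hk⟩:Fin n).castSucc are defeq
        apply hinj (⟨k+1, hk⟩ : Fin n).castSucc
        show h (⟨k, hk'⟩ : Fin n).succ (q ⟨k, hk'⟩).2
            = h (⟨k+1, hk⟩ : Fin n).castSucc (q ⟨k+1, hk⟩).1
        rw [hq2 ⟨k, hk'⟩, hq1 ⟨k+1, hk⟩]
        rfl
    have hchain' : ∀ i : Fin n,
        (VFDChainSeq a b' i.castSucc, VFDChainSeq a b' i.succ) ∈ S i := by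
      intro i
      have h2 : VFDChainSeq a b' i.succ = b' i := by simp [VFDChainSeq]
      rw [hseq i, h2, hb']
      exact hqS i
    have hbb' : b = b' := hfun a b b' (hcont a b hab) hchain'
    refine ⟨a, b, hab, ?_⟩
    funext j
    induction j using Fin.cases with
    | zero =>
      have hz : VFDChainSeq a b (0 : Fin (n+1)) = a := by simp [VFDChainSeq]
      have h3 : h (0 : Fin (n+1)) a = w 0 := by
        rw [← hq01]; exact hq1 ⟨0, hn⟩
      rw [hz]; exact h3.symm
    | succ i =>
      have hsucc : VFDChainSeq a b i.succ = b i := by simp [VFDChainSeq]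
      rw [hsucc, hbb']
      exact (hq2 i).symm
  · rintro ⟨a, b, hab, rfl⟩ i
    exact ⟨(VFDChainSeq a b i.castSucc, VFDChainSeq a b i.succ), hcont a b hab i, rfl⟩
end

section
/- Let V and C be types and let U_1, U_2 ⊆ V. Model a tuple over U ⊆ V as a function t : V → Option C with t(v) = none for all v ∉ U, and model a solution mapping with support contained in U the same way (so its null-padded extension is itself). Say s_1 and s_2 are SPARQL-compatible if s_1(v) = s_2(v) whenever s_1(v) ≠ none and s_2(v) ≠ none, and in that case let s_1 ⊕ s_2 be the function with (s_1 ⊕ s_2)(v) = s_1(v) if s_1(v) ≠ none and s_2(v) otherwise. For sets S_1, S_2 of solution mappings with supports contained in U_1 and U_2 respectively, define Join(S_1,S_2) = {s_1 ⊕ s_2 | s_1 ∈ S_1, s_2 ∈ S_2 SPARQL-compatible}. For relations T_1 over attribute set W_1 and T_2 over W_2, define the SQL join T_1 ⋈ T_2 = {t_1 ⊕ t_2 | t_1 ∈ T_1, t_2 ∈ T_2, and t_1(v) = t_2(v) ≠ none for every v ∈ W_1 ∩ W_2}; for V' ⊆ W define σ_{isNull(V')}T = {t ∈ T | t(v) =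 none for all v ∈ V'} and π_{W∖V'}t as the tuple obtained from t by setting all coordinates in V' to none. Then Join(S_1,S_2) = ⋃ over all pairs of disjoint subsets V_1, V_2 ⊆ U_1 ∩ U_2 of (π_{U_1∖V_1} σ_{isNull(V_1)} S_1) ⋈ (π_{U_2∖V_2} σ_{isNull(V_2)} S_2). -/
/-- Two `Option`-valued functions (solution mappings / tuples) are
SPARQL-compatible if they agree on every variable bound in both. -/
def SMCompatible {V C : Type*} (s₁ s₂ : V → Option C) : Prop :=
  ∀ v : V, s₁ v ≠ none → s₂ v ≠ none → s₁ v = s₂ v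

/-- The merge `s₁ ⊕ s₂`: agrees with `s₁` where `s₁` is bound (non-null),
and with `s₂` elsewhere. -/
def SMMerge {V C : Type*} (s₁ s₂ : V → Option C) : V → Option C :=
  fun v => (s₁ v).elim (s₂ v) some

/-- SPARQL Join on sets of solution mappings. -/
def SMJoin {V C : Type*} (S₁ S₂ : Set (V → Option C)) : Set (V → Option C) :=
  {m | ∃ s₁ ∈ S₁, ∃ s₂ ∈ S₂, SMCompatible s₁ s₂ ∧ m = SMMerge s₁ s₂}

/-- SQL natural join of relations `T₁` over attributes `W₁` and `T₂` over
`W₂`: tuples must agree and be non-null on all common attributes. -/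
def SqlJoin {V C : Type*} (W₁ W₂ : Set V) (T₁ T₂ : Set (V → Option C)) :
    Set (V → Option C) :=
  {m | ∃ t₁ ∈ T₁, ∃ t₂ ∈ T₂,
        (∀ v ∈ W₁ ∩ W₂, t₁ v = t₂ v ∧ t₁ v ≠ none) ∧ m = SMMerge t₁ t₂}

/-- SQL selection `σ_{isNull(V')}`: keep the tuples that are null on all of `V'`. -/
def SqlSelNull {V C : Type*} (V' : Set V) (T : Set (V → Option C)) :
    Set (V → Option C) :=
  {t ∈ T | ∀ v ∈ V', t v = none}

open Classical in
/-- SQL projection `π_{W ∖ V'}` on a tuple: set all attributes in `V'` to null. -/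
noncomputable def SqlProjOut {V C : Type*} (V' : Set V) (t : V → Option C) :
    V → Option C :=
  fun v => if v ∈ V' then none else t v


lemma sqlProjOut_eq_self {V C : Type*} (V' : Set V) (s : V → Option C)
    (h : ∀ v ∈ V', s v = none) : SqlProjOut V' s = s := by
  funext v
  by_cases hv : v ∈ V'
  · simp [SqlProjOut, hv, (h v hv).symm]
  · simp [SqlProjOut, hv]

/-- Appendix theorem, Join case: the SPARQL Join of two sets of solution
mappings with supports in `U₁` and `U₂` equals the union, over all pairs of
disjoint subsets `V₁, V₂ ⊆ U₁ ∩ U₂`, of the SQL natural joins of the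
null-filtered projections. -/
theorem sparql_join_as_sql_union {V C : Type*} (U₁ U₂ : Set V)
    (S₁ S₂ : Set (V → Option C))
    (hU₁ : ∀ s ∈ S₁, ∀ v ∉ U₁, s v = none)
    (hU₂ : ∀ s ∈ S₂, ∀ v ∉ U₂, s v = none) :
    SMJoin S₁ S₂ =
      ⋃ (V₁ : Set V) (V₂ : Set V) (_ : V₁ ⊆ U₁ ∩ U₂) (_ : V₂ ⊆ U₁ ∩ U₂)
        (_ : Disjoint V₁ V₂),
        SqlJoin (U₁ \ V₁) (U₂ \ V₂)
          (SqlProjOut V₁ '' SqlSelNull V₁ S₁)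
          (SqlProjOut V₂ '' SqlSelNull V₂ S₂) := by
  ext m
  simp only [Set.mem_iUnion]
  constructor
  · rintro ⟨s₁, hs₁, s₂, hs₂, hc, rfl⟩
    refine ⟨{v | v ∈ U₁ ∩ U₂ ∧ s₁ v = none},
            {v | v ∈ U₁ ∩ U₂ ∧ s₂ v = none ∧ s₁ v ≠ none},
            fun v hv => hv.1, fun v hv => hv.1, ?_, ?_⟩
    · rw [Set.disjoint_left]
      rintro v ⟨_, h1⟩ ⟨_, _, h3⟩
      exact h3 h1
    · refine ⟨s₁, ⟨s₁, ⟨hs₁, fun v hv => hv.2⟩,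
        sqlProjOut_eq_self _ _ (fun v hv => hv.2)⟩,
        s₂, ⟨s₂, ⟨hs₂, fun v hv => hv.2.1⟩,
        sqlProjOut_eq_self _ _ (fun v hv => hv.2.1)⟩, ?_, rfl⟩
      rintro v ⟨⟨hv1, hnv1⟩, hv2, hnv2⟩
      have h1 : s₁ v ≠ none := fun h => hnv1 ⟨⟨hv1, hv2⟩, h⟩
      have h2 : s₂ v ≠ none := fun h => hnv2 ⟨⟨hv1, hv2⟩, h, h1⟩
      exact ⟨hc v h1 h2, h1⟩
  · rintro ⟨V₁, V₂, hV₁, hV₂, hd, t₁, ⟨s₁, ⟨hs₁, hn₁⟩, rfl⟩,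
      t₂, ⟨s₂, ⟨hs₂, hn₂⟩, rfl⟩, hj, rfl⟩
    rw [sqlProjOut_eq_self _ _ hn₁, sqlProjOut_eq_self _ _ hn₂] at hj ⊢
    refine ⟨s₁, hs₁, s₂, hs₂, ?_, rfl⟩
    intro v h1 h2
    have hu1 : v ∈ U₁ := by
      by_contra h; exact h1 (hU₁ s₁ hs₁ v h)
    have hu2 : v ∈ U₂ := by
      by_contra h; exact h2 (hU₂ s₂ hs₂ v h)
    have hv1 : v ∉ V₁ := fun h => h1 (hn₁ v h)
    have hv2 : v ∉ V₂ := fun h => h2 (hn₂ v h)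
    exact (hj v ⟨⟨hu1, hv1⟩, hu2, hv2⟩).1
end

section
/- Let V and C be types, U_1, U_2 ⊆ V, and let s_1, s_2 : V → Option C satisfy {v | s_1(v) ≠ none} ⊆ U_1 and {v | s_2(v) ≠ none} ⊆ U_2. Then s_1(v) = s_2(v) holds for every v with s_1(v) ≠ none and s_2(v) ≠ none (i.e., s_1 and s_2 are SPARQL-compatible) if and only if there exist disjoint subsets V_1, V_2 ⊆ U_1 ∩ U_2 such that s_1(v) = none for all v ∈ V_1, s_2(v) = none for all v ∈ V_2, and s_1(v) = s_2(v) ≠ none for every v ∈ (U_1 ∩ U_2) ∖ (V_1 ∪ V_2). -/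
/-- Characterization of SPARQL compatibility of two solution mappings with
supports in `U₁` and `U₂` by a pair of disjoint null-pattern subsets of
`U₁ ∩ U₂`. -/
theorem sparql_compatible_iff_null_patterns {V C : Type*} (U₁ U₂ : Set V)
    (s₁ s₂ : V → Option C)
    (h₁ : ∀ v : V, s₁ v ≠ none → v ∈ U₁)
    (h₂ : ∀ v : V, s₂ v ≠ none → v ∈ U₂) :
    (∀ v : V, s₁ v ≠ none → s₂ v ≠ none → s₁ v = s₂ v) ↔
      ∃ V₁ V₂ : Set V, V₁ ⊆ U₁ ∩ U₂ ∧ V₂ ⊆ U₁ ∩ U₂ ∧ Disjoint V₁ V₂ ∧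
        (∀ v ∈ V₁, s₁ v = none) ∧ (∀ v ∈ V₂, s₂ v = none) ∧
        (∀ v ∈ (U₁ ∩ U₂) \ (V₁ ∪ V₂), s₁ v = s₂ v ∧ s₁ v ≠ none) := by
  constructor
  · intro hc
    refine ⟨{v ∈ U₁ ∩ U₂ | s₁ v = none}, {v ∈ U₁ ∩ U₂ | s₁ v ≠ none ∧ s₂ v = none},
      fun v hv => hv.1, fun v hv => hv.1, ?_, fun v hv => hv.2, fun v hv => hv.2.2, ?_⟩
    · rw [Set.disjoint_left]
      rintro v ⟨_, hn⟩ ⟨_, hn', _⟩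
      exact hn' hn
    · rintro v ⟨hv, hnv⟩
      simp only [Set.mem_union, Set.mem_setOf_eq, not_or] at hnv
      have hs1 : s₁ v ≠ none := fun h => hnv.1 ⟨hv, h⟩
      have hs2 : s₂ v ≠ none := fun h => hnv.2 ⟨hv, hs1, h⟩
      exact ⟨hc v hs1 hs2, hs1⟩
  · rintro ⟨V₁, V₂, _, _, _, hV₁, hV₂, h6⟩ v hs1 hs2
    have hv : v ∈ U₁ ∩ U₂ := ⟨h₁ v hs1, h₂ v hs2⟩
    have : v ∉ V₁ ∪ V₂ := by
      rintro (h | h)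
      · exact hs1 (hV₁ v h)
      · exact hs2 (hV₂ v h)
    exact (h6 v ⟨hv, this⟩).1
end

section
/- Let U and A be types, I a nonempty index type, and for each i ∈ I a type B_i. Let f : A → U be injective, let g_i : B_i → U be arbitrary functions, and let R_i ⊆ A × B_i for each i ∈ I. Then {(u, v) ∈ U × (Π_{i∈I} U) | for every i ∈ I, (u, v(i)) ∈ {(f(a), g_i(b)) | (a,b) ∈ R_i}} = {(f(a), (g_i(b(i)))_{i∈I}) | (a, b) with (a, b(i)) ∈ R_i for every i ∈ I}. -/
/-- Structural optimization: URI-constructing functions can be pushed to the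
root of the query tree — with a shared injective subject template `f`, the
join of the unfolded property relations over URIs equals the image, under the
template functions, of the join performed directly over database values. -/
theorem push_templates_to_root
    {U A : Type*} {I : Type*} [Nonempty I] {B : I → Type*}
    (f : A → U) (hf : Function.Injective f)
    (g : ∀ i, B i → U) (R : ∀ i, Set (A × B i)) :
    {p : U × (I → U) | ∀ i : I,
        (p.1, p.2 i) ∈ (fun q : A × B i => (f q.1, g i q.2)) '' R i}
      = {p : U × (I → U) | ∃ (a : A) (b : ∀ i, B i),
          (∀ i : I, (a, b i) ∈ R i) ∧ p = (f a, fun i => g i (b i))} := by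
  ext p
  simp only [Set.mem_setOf_eq, Set.mem_image]
  constructor
  · intro h
    obtain ⟨i0⟩ := ‹Nonempty I›
    obtain ⟨q0, hq0, heq0⟩ := h i0
    have ha : f q0.1 = p.1 := (Prod.mk.injEq _ _ _ _ ▸ heq0).1
    refine ⟨q0.1, fun i => (h i).choose.2, fun i => ?_, ?_⟩
    · have hc := (h i).choose_spec
      have h1 : f (h i).choose.1 = p.1 := (Prod.mk.injEq _ _ _ _ ▸ hc.2).1
      have : (h i).choose.1 = q0.1 := hf (h1.trans ha.symm)
      simpa [← this] using hc.1
    · have h2 : ∀ i, p.2 i = g i (h i).choose.2 :=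
        fun i => ((Prod.mk.injEq _ _ _ _ ▸ (h i).choose_spec.2).2).symm
      exact Prod.ext ha.symm (funext fun i => h2 i)
  · rintro ⟨a, b, hb, rfl⟩
    intro i
    exact ⟨(a, b i), hb i, rfl⟩
end
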